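/- Let W be a binary-input channel with finite output alphabet 𝒴 such that W(y|x) > 0 for all y ∈ 𝒴 and x ∈ {0,1}, let Z = Z(W), and let k ≥ 1. Let (Y_z)_{z∈𝔽₂^k} be i.i.d. with each Y_z distributed according to W(·|0), and set L(z) = ln(W(Y_z|0)/W(Y_z|1)). Then the probability that there exists z ∈ 𝔽₂^k such that ∑_{z' ∈ 𝔽₂^k, z' ≠ z} L(z') < 0 is at most 2^k · Z^{2^k − 1}. -/

import Mathlib

/-!
Union bound over `z`, then a Chernoff-type bound for each `z`: on the event, the likelihood ratio
`∏_{z' ≠ z} W(y_{z'}|0) / W(y_{z'}|1)` is below `1`, so the `W(·|0)`-mass of those coordinates is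
at most `∏_{z' ≠ z} √(W(y_{z'}|0) W(y_{z'}|1))`; summing over `y` gives `Z` per coordinate.
-/

open Finset Real

section

variable {ι α : Type*}

lemma prod_le_prod_sqrt_mul_of_prod_le {s : Finset ι} {f g : ι → ℝ} (hf : ∀ i ∈ s, 0 ≤ f i)
    (hg : ∀ i ∈ s, 0 ≤ g i) (h : ∏ i ∈ s, f i ≤ ∏ i ∈ s, g i) :
    ∏ i ∈ s, f i ≤ ∏ i ∈ s, √(f i * g i) := by
  have hf' : 0 ≤ ∏ i ∈ s, f i := prod_nonneg hf
  rw [← sqrt_prod s fun i hi => mul_nonneg (hf i hi) (hg i hi), prod_mul_distrib,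
    le_sqrt hf' (mul_nonneg hf' (prod_nonneg hg)), sq]
  exact mul_le_mul_of_nonneg_left h hf'

lemma prod_lt_prod_of_sum_log_div_neg {s : Finset ι} {f g : ι → ℝ} (hf : ∀ i ∈ s, 0 < f i)
    (hg : ∀ i ∈ s, 0 < g i) (h : ∑ i ∈ s, log (f i / g i) < 0) :
    ∏ i ∈ s, f i < ∏ i ∈ s, g i := by
  rwa [← log_prod fun i hi => (div_pos (hf i hi) (hg i hi)).ne',
    log_neg_iff (prod_pos fun i hi => div_pos (hf i hi) (hg i hi)), prod_div_distrib,
    div_lt_one (prod_pos hg)] at h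

lemma sum_filter_exists_le_sum {M : Type*} [AddCommMonoid M] [PartialOrder M]
    [IsOrderedAddMonoid M] [Fintype ι] (s : Finset α) (P : ι → α → Prop)
    [∀ i, DecidablePred (P i)] [DecidablePred fun a => ∃ i, P i a] {f : α → M}
    (hf : ∀ a ∈ s, 0 ≤ f a) :
    ∑ a ∈ s with ∃ i, P i a, f a ≤ ∑ i, ∑ a ∈ s with P i a, f a := by
  simp only [sum_filter]
  rw [sum_comm]
  refine sum_le_sum fun a ha => ?_
  split_ifs with hP
  · obtain ⟨i, hi⟩ := hP
    calc f a = if P i a then f a else 0 := (if_pos hi).symm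
      _ ≤ ∑ j, if P j a then f a else 0 :=
        single_le_sum (f := fun j => if P j a then f a else 0)
          (fun j _ => ite_nonneg (hf a ha) le_rfl) (mem_univ i)
  · exact sum_nonneg fun j _ => ite_nonneg (hf a ha) le_rfl

noncomputable def bhattacharyya [Fintype α] (p q : α → ℝ) : ℝ := ∑ a, √(p a * q a)

theorem sum_prod_filter_sum_log_div_neg_le_bhattacharyya_pow [Fintype ι] [DecidableEq ι]
    [Fintype α] {p q : α → ℝ} (hp : ∀ a, 0 < p a) (hq : ∀ a, 0 < q a) (hp_sum : ∑ a, p a = 1)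
    (s : Finset ι) [DecidablePred fun y : ι → α => ∑ j ∈ s, log (p (y j) / q (y j)) < 0] :
    ∑ y : ι → α with ∑ j ∈ s, log (p (y j) / q (y j)) < 0, ∏ j, p (y j)
      ≤ bhattacharyya p q ^ #s := by
  set g : ι → α → ℝ := fun j a => if j ∈ s then √(p a * q a) else p a
  have hg : ∀ j a, 0 ≤ g j a := fun j a => by
    simp only [g]; split_ifs <;> [exact sqrt_nonneg _; exact (hp a).le]
  have hle : ∀ y : ι → α, ∑ j ∈ s, log (p (y j) / q (y j)) < 0 →
      ∏ j, p (y j) ≤ ∏ j, g j (y j) := by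
    intro y hy
    have hlt := prod_lt_prod_of_sum_log_div_neg (fun j _ => hp (y j)) (fun j _ => hq (y j)) hy
    rw [← prod_mul_prod_compl s, ← prod_mul_prod_compl s fun j => g j (y j),
      prod_congr rfl fun j hj => if_pos hj, prod_congr rfl fun j hj => if_neg (mem_compl.1 hj)]
    exact mul_le_mul_of_nonneg_right
      (prod_le_prod_sqrt_mul_of_prod_le (fun j _ => (hp _).le) (fun j _ => (hq _).le) hlt.le)
      (prod_nonneg fun j _ => (hp _).le)
  have hsum : ∀ j, ∑ a, g j a = if j ∈ s then bhattacharyya p q else 1 := fun j => by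
    simp only [g]; split_ifs <;> [rfl; exact hp_sum]
  calc _ ≤ ∑ y : ι → α with ∑ j ∈ s, log (p (y j) / q (y j)) < 0, ∏ j, g j (y j) :=
        sum_le_sum fun y hy => hle y (mem_filter.1 hy).2
    _ ≤ ∑ y : ι → α, ∏ j, g j (y j) :=
      sum_le_sum_of_subset_of_nonneg (filter_subset _ _) fun y _ _ => prod_nonneg fun j _ => hg j _
    _ = ∏ j, ∑ a, g j a := (Fintype.prod_sum g).symm
    _ = bhattacharyya p q ^ #s := by simp only [hsum, prod_ite_mem, univ_inter, prod_const]

end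

open scoped Classical in
theorem aggregation_error_union_bound_general {𝒴 : Type*} [Fintype 𝒴]
    (W : Bool → 𝒴 → ℝ)
    (hW_pos : ∀ x y, 0 < W x y)
    (hW_sum : ∀ x, ∑ y, W x y = 1)
    (k : ℕ) :
    ∑ y ∈ Finset.univ.filter
        (fun y : (Fin k → ZMod 2) → 𝒴 =>
          ∃ z : Fin k → ZMod 2,
            ∑ z' ∈ Finset.univ.filter (fun z' : Fin k → ZMod 2 => z' ≠ z),
              Real.log (W false (y z') / W true (y z')) < 0),
      ∏ z : Fin k → ZMod 2, W false (y z)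
      ≤ (2 : ℝ) ^ k *
          (∑ w : 𝒴, Real.sqrt (W false w * W true w)) ^ (2 ^ k - 1) := by
  have hcard : ∀ z : Fin k → ZMod 2, #(univ.filter (· ≠ z)) = 2 ^ k - 1 := fun z => by
    rw [filter_ne', card_erase_of_mem (mem_univ z), card_univ, Fintype.card_fun, ZMod.card,
      Fintype.card_fin]
  have hmass : ∀ y ∈ (univ : Finset ((Fin k → ZMod 2) → 𝒴)), 0 ≤ ∏ z, W false (y z) :=
    fun y _ => prod_nonneg fun z _ => (hW_pos _ _).le
  refine (sum_filter_exists_le_sum (ι := Fin k → ZMod 2) univ _ hmass).trans ?_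
  calc _ ≤ ∑ _z : Fin k → ZMod 2, bhattacharyya (W false) (W true) ^ (2 ^ k - 1) :=
        sum_le_sum fun z _ => by
          rw [← hcard z]
          exact sum_prod_filter_sum_log_div_neg_le_bhattacharyya_pow (hW_pos false) (hW_pos true)
            (hW_sum false) _
    _ = _ := by simp [bhattacharyya]

open scoped Classical in
/-- For a binary-input channel `W` with finite output alphabet, strictly
positive transition probabilities, and Bhattacharyya parameter `Z`, if `(Y_z)_{z∈𝔽₂^k}` are
i.i.d. `∼ W(·|0)` and `L(z) = ln(W(Y_z|0)/W(Y_z|1))`, then the probability that some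
`z ∈ 𝔽₂^k` satisfies `∑_{z' ≠ z} L(z') < 0` is at most `2^k · Z^{2^k − 1}`. -/
theorem aggregation_error_union_bound {𝒴 : Type*} [Fintype 𝒴]
    (W : Bool → 𝒴 → ℝ)
    (hW_pos : ∀ x y, 0 < W x y)
    (hW_sum : ∀ x, ∑ y, W x y = 1)
    (k : ℕ) (hk : 1 ≤ k) :
    ∑ y ∈ Finset.univ.filter
        (fun y : (Fin k → ZMod 2) → 𝒴 =>
          ∃ z : Fin k → ZMod 2,
            ∑ z' ∈ Finset.univ.filter (fun z' : Fin k → ZMod 2 => z' ≠ z),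
              Real.log (W false (y z') / W true (y z')) < 0),
      ∏ z : Fin k → ZMod 2, W false (y z)
      ≤ (2 : ℝ) ^ k *
          (∑ w : 𝒴, Real.sqrt (W false w * W true w)) ^ (2 ^ k - 1) :=
  aggregation_error_union_bound_general W hW_pos hW_sum k
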